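/- Each component of the Dunkl Demkov–Fradkin tensor F̂_{ij} = π̂ᵢπ̂ⱼ + ω² x̂ᵢx̂ⱼ commutes with the Dunkl oscillator Hamiltonian Ĥ = π̂²/2 + ω² x̂²/2: [Ĥ, F̂_{ij}] = 0 for all i, j. -/

import Mathlib

open Complex BigOperators Finset

noncomputable section

variable {N : ℕ}

/-- Reflection of the `i`-th coordinate: `σᵢ(x)` flips the sign of `xᵢ`. -/
def flipC (i : Fin N) (x : Fin N → ℝ) : Fin N → ℝ := Function.update x i (-(x i))

/-- The reflection operator `R̂ᵢ f (x) = f (σᵢ x)`. -/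
def Rop (i : Fin N) (f : (Fin N → ℝ) → ℂ) : (Fin N → ℝ) → ℂ := fun x => f (flipC i x)

/-- The Dunkl derivative `Dᵢ f (x) = ∂ᵢ f(x) + (μᵢ/xᵢ)(f(x) - f(σᵢ x))`. -/
def Dop (μ : Fin N → ℝ) (i : Fin N) (f : (Fin N → ℝ) → ℂ) : (Fin N → ℝ) → ℂ :=
  fun x => fderiv ℝ f x (Pi.single i 1) + ((μ i : ℂ) / (x i : ℂ)) * (f x - f (flipC i x))

/-- The Dunkl momentum operator `π̂ᵢ = -iℏ Dᵢ`. -/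
def Pop (μ : Fin N → ℝ) (hb : ℝ) (i : Fin N) (f : (Fin N → ℝ) → ℂ) : (Fin N → ℝ) → ℂ :=
  fun x => -(Complex.I * (hb : ℂ)) * Dop μ i f x

/-- The Dunkl angular momentum operator `Λ̂ᵢⱼ = x̂ᵢ π̂ⱼ - x̂ⱼ π̂ᵢ`. -/
def Lam (μ : Fin N → ℝ) (hb : ℝ) (i j : Fin N) (f : (Fin N → ℝ) → ℂ) : (Fin N → ℝ) → ℂ :=
  fun x => (x i : ℂ) * Pop μ hb j f x - (x j : ℂ) * Pop μ hb i f x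

/-- The complement of the coordinate hyperplanes in `ℝ^N`. -/
def Udom (N : ℕ) : Set (Fin N → ℝ) := {x | ∀ i, x i ≠ 0}

/-- The Dunkl oscillator Hamiltonian `Ĥ = π̂²/2 + ω² x̂²/2`. -/
def Hosc (μ : Fin N → ℝ) (hb ω : ℝ) (f : (Fin N → ℝ) → ℂ) : (Fin N → ℝ) → ℂ :=
  fun x => (1 / 2 : ℂ) * ∑ i, Pop μ hb i (Pop μ hb i f) x
    + (ω : ℂ) ^ 2 / 2 * (∑ i, (x i : ℂ) ^ 2) * f x

/-- The Dunkl Demkov–Fradkin tensor `F̂ᵢⱼ = π̂ᵢ π̂ⱼ + ω² x̂ᵢ x̂ⱼ`. -/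
def DF (μ : Fin N → ℝ) (hb ω : ℝ) (i j : Fin N) (f : (Fin N → ℝ) → ℂ) : (Fin N → ℝ) → ℂ :=
  fun x => Pop μ hb i (Pop μ hb j f) x + (ω : ℂ) ^ 2 * (x i : ℂ) * (x j : ℂ) * f x

namespace DunklAux

lemma isOpen_Udom : IsOpen (Udom N) := by
  have h : Udom N = ⋂ i, (fun x : Fin N → ℝ => x i) ⁻¹' {0}ᶜ := by
    ext x; simp [Udom, Set.mem_iInter]
  rw [h]
  exact isOpen_iInter_of_finite fun i => isOpen_compl_singleton.preimage (continuous_apply i)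

lemma mem_nhds_Udom {x : Fin N → ℝ} (hx : x ∈ Udom N) : Udom N ∈ nhds x :=
  isOpen_Udom.mem_nhds hx

@[simp] lemma flipC_self (i : Fin N) (x : Fin N → ℝ) : flipC i x i = -(x i) := by
  simp [flipC]

lemma flipC_ne {i j : Fin N} (h : j ≠ i) (x : Fin N → ℝ) : flipC i x j = x j := by
  simp [flipC, Function.update_of_ne h]

@[simp] lemma flipC_flipC (i : Fin N) (x : Fin N → ℝ) : flipC i (flipC i x) = x := by
  funext m
  rcases eq_or_ne m i with rfl | h
  · simp
  · rw [flipC_ne h, flipC_ne h]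

lemma flipC_mem {x : Fin N → ℝ} (hx : x ∈ Udom N) (i : Fin N) : flipC i x ∈ Udom N := by
  intro m
  rcases eq_or_ne m i with rfl | h
  · simpa using hx m
  · rw [flipC_ne h]; exact hx m

lemma flipC_comm (i j : Fin N) (x : Fin N → ℝ) : flipC i (flipC j x) = flipC j (flipC i x) := by
  rcases eq_or_ne i j with rfl | hij
  · rfl
  funext m
  by_cases hmi : m = i
  · subst hmi
    simp [flipC_ne hij]
  by_cases hmj : m = j
  · subst hmj
    simp [flipC_ne (Ne.symm hij)]
  · rw [flipC_ne hmi, flipC_ne hmj, flipC_ne hmj, flipC_ne hmi]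

def flipL (i : Fin N) : (Fin N → ℝ) →L[ℝ] (Fin N → ℝ) :=
  LinearMap.toContinuousLinearMap
  { toFun := flipC i
    map_add' := by
      intro x y; funext m
      rcases eq_or_ne m i with rfl | h
      · simp [flipC]; ring
      · simp [flipC_ne h]
    map_smul' := by
      intro c x; funext m
      rcases eq_or_ne m i with rfl | h
      · simp [flipC, mul_comm]
      · simp [flipC_ne h] }

@[simp] lemma flipL_apply (i : Fin N) (x : Fin N → ℝ) : flipL i x = flipC i x := rfl

lemma flipL_single_self (i : Fin N) : flipL i (Pi.single i (1:ℝ)) = -Pi.single i 1 := by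
  funext m
  rcases eq_or_ne m i with rfl | h
  · simp
  · simp [flipC_ne h, Pi.single_apply, h]

lemma flipL_single_ne {i k : Fin N} (h : k ≠ i) : flipL i (Pi.single k (1:ℝ)) = Pi.single k 1 := by
  funext m
  by_cases hm : m = i
  · subst hm
    show flipC m (Pi.single k 1) m = _
    rw [flipC_self]
    simp [Pi.single_apply, Ne.symm h]
  · show flipC i (Pi.single k 1) m = _
    rw [flipC_ne hm]


/-! ### Smoothness infrastructure -/

def coordL (m : Fin N) : (Fin N → ℝ) →L[ℝ] ℂ :=
  Complex.ofRealCLM.comp (ContinuousLinearMap.proj m)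

lemma coordL_single (m k : Fin N) :
    coordL m (Pi.single k (1:ℝ)) = if k = m then 1 else 0 := by
  by_cases h : k = m
  · subst h; simp [coordL]
  · simp [coordL, Pi.single_apply, h, Ne.symm h]

abbrev SOn (g : (Fin N → ℝ) → ℂ) : Prop := ContDiffOn ℝ (⊤ : ℕ∞) g (Udom N)

lemma SOn.cAt {g : (Fin N → ℝ) → ℂ} (hg : SOn g) {x : Fin N → ℝ} (hx : x ∈ Udom N) :
    ContDiffAt ℝ (⊤ : ℕ∞) g x := hg.contDiffAt (mem_nhds_Udom hx)

lemma SOn.dAt {g : (Fin N → ℝ) → ℂ} (hg : SOn g) {x : Fin N → ℝ} (hx : x ∈ Udom N) :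
    DifferentiableAt ℝ g x := (hg.cAt hx).differentiableAt (by simp)

lemma SOn.fd {g : (Fin N → ℝ) → ℂ} (hg : SOn g) (v : Fin N → ℝ) :
    SOn (fun y => fderiv ℝ g y v) := by
  have h1 : ContDiffOn ℝ (⊤ : ℕ∞) (fderiv ℝ g) (Udom N) :=
    hg.fderiv_of_isOpen isOpen_Udom (by simp)
  exact (ContinuousLinearMap.apply ℝ ℂ v).contDiff.comp_contDiffOn h1

lemma SOn.rop {g : (Fin N → ℝ) → ℂ} (hg : SOn g) (i : Fin N) : SOn (Rop i g) := by
  have : Rop i g = g ∘ (flipL i) := rfl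
  rw [this]
  exact hg.comp (flipL i).contDiff.contDiffOn (fun y hy => flipC_mem hy i)

lemma SOn.dop {g : (Fin N → ℝ) → ℂ} (hg : SOn g) (μ : Fin N → ℝ) (i : Fin N) :
    SOn (Dop μ i g) := by
  apply (hg.fd _).add
  apply ContDiffOn.mul
  · have hc : ContDiffOn ℝ (⊤ : ℕ∞) (fun y : Fin N → ℝ => ((y i : ℝ) : ℂ)) (Udom N) :=
      (coordL i).contDiff.contDiffOn
    have hinv : ContDiffOn ℝ (⊤ : ℕ∞) (fun y : Fin N → ℝ => (((y i : ℝ) : ℂ))⁻¹) (Udom N) :=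
      hc.inv (fun y hy => Complex.ofReal_ne_zero.2 (hy i))
    have h2 := (contDiffOn_const (c := ((μ i : ℝ) : ℂ))).mul hinv
    have heq : (fun y : Fin N → ℝ => ((μ i : ℝ) : ℂ) / ((y i : ℝ) : ℂ))
        = fun y : Fin N → ℝ => ((μ i : ℝ) : ℂ) * (((y i : ℝ) : ℂ))⁻¹ := by
      funext y; rw [div_eq_mul_inv]
    rw [heq]
    exact h2
  · exact hg.sub (hg.rop i)

lemma SOn.coord_mul {g : (Fin N → ℝ) → ℂ} (hg : SOn g) (m : Fin N) :
    SOn (fun y => ((y m : ℝ) : ℂ) * g y) :=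
  ((coordL m).contDiff.contDiffOn).mul hg

lemma SOn.const_mul {g : (Fin N → ℝ) → ℂ} (hg : SOn g) (c : ℂ) :
    SOn (fun y => c * g y) := contDiffOn_const.mul hg

lemma SOn.sumsq_mul {g : (Fin N → ℝ) → ℂ} (hg : SOn g) :
    SOn (fun y => (∑ m, ((y m : ℝ) : ℂ) ^ 2) * g y) := by
  apply ContDiffOn.mul _ hg
  apply ContDiffOn.sum
  intro m _
  exact ((coordL m).contDiff.contDiffOn).pow 2

lemma SOn.sumD {f : (Fin N → ℝ) → ℂ} (hf : SOn f) (μ : Fin N → ℝ) :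
    SOn (fun y => ∑ k, Dop μ k (Dop μ k f) y) := by
  apply ContDiffOn.sum
  intro k _
  exact (hf.dop μ k).dop μ k


/-! ### Pointwise computation rules for `Dop` -/

variable {μ : Fin N → ℝ} {x : Fin N → ℝ} {g g₁ g₂ : (Fin N → ℝ) → ℂ}

lemma Dop_congr (h : Set.EqOn g₁ g₂ (Udom N)) (μ : Fin N → ℝ) (k : Fin N)
    (hx : x ∈ Udom N) : Dop μ k g₁ x = Dop μ k g₂ x := by
  have hev : g₁ =ᶠ[nhds x] g₂ := Filter.eventuallyEq_of_mem (mem_nhds_Udom hx) h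
  show fderiv ℝ g₁ x _ + _ = fderiv ℝ g₂ x _ + _
  rw [hev.fderiv_eq, h hx, h (flipC_mem hx k)]

lemma Dop_congr_fun (h : Set.EqOn g₁ g₂ (Udom N)) (μ : Fin N → ℝ) (k : Fin N) :
    Set.EqOn (Dop μ k g₁) (Dop μ k g₂) (Udom N) := fun _ hy => Dop_congr h μ k hy

lemma Dop_add (μ : Fin N → ℝ) (k : Fin N) (h₁ : DifferentiableAt ℝ g₁ x)
    (h₂ : DifferentiableAt ℝ g₂ x) :
    Dop μ k (fun y => g₁ y + g₂ y) x = Dop μ k g₁ x + Dop μ k g₂ x := by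
  show fderiv ℝ _ x _ + _ = _
  rw [fderiv_fun_add h₁ h₂]
  simp only [ContinuousLinearMap.add_apply]
  unfold Dop
  ring

lemma Dop_const_mul (c : ℂ) (μ : Fin N → ℝ) (k : Fin N) (hg : DifferentiableAt ℝ g x) :
    Dop μ k (fun y => c * g y) x = c * Dop μ k g x := by
  show fderiv ℝ _ x _ + _ = _
  rw [fderiv_const_mul hg c]
  simp only [ContinuousLinearMap.coe_smul', Pi.smul_apply, smul_eq_mul]
  unfold Dop
  ring

lemma Dop_sum {ι : Type*} (s : Finset ι) (G : ι → (Fin N → ℝ) → ℂ) (μ : Fin N → ℝ)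
    (k : Fin N) (hG : ∀ m ∈ s, DifferentiableAt ℝ (G m) x) :
    Dop μ k (fun y => ∑ m ∈ s, G m y) x = ∑ m ∈ s, Dop μ k (G m) x := by
  show fderiv ℝ _ x _ + _ = _
  rw [fderiv_fun_sum hG]
  unfold Dop
  rw [Finset.sum_add_distrib]
  congr 1
  · simp [ContinuousLinearMap.sum_apply]
  · rw [show (fun y => ∑ m ∈ s, G m y) x = ∑ m ∈ s, G m x from rfl,
      show (fun y => ∑ m ∈ s, G m y) (flipC k x) = ∑ m ∈ s, G m (flipC k x) from rfl,
      ← Finset.sum_sub_distrib, Finset.mul_sum]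

lemma diffAt_coord (m : Fin N) : DifferentiableAt ℝ (fun y : Fin N → ℝ => ((y m : ℝ) : ℂ)) x :=
  (coordL m).differentiableAt

lemma fderiv_coord_single (m k : Fin N) :
    fderiv ℝ (fun y : Fin N → ℝ => ((y m : ℝ) : ℂ)) x (Pi.single k 1)
      = if k = m then 1 else 0 := by
  have h1 : (fun y : Fin N → ℝ => ((y m : ℝ) : ℂ)) = ⇑(coordL m) := rfl
  rw [h1, ContinuousLinearMap.fderiv, coordL_single]

lemma Dop_coord_mul (μ : Fin N → ℝ) (k m : Fin N) (hg : DifferentiableAt ℝ g x)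
    (hx : x ∈ Udom N) :
    Dop μ k (fun y => ((y m : ℝ) : ℂ) * g y) x
      = ((x m : ℝ) : ℂ) * Dop μ k g x
        + (if k = m then g x + 2 * ((μ k : ℝ) : ℂ) * g (flipC k x) else 0) := by
  show fderiv ℝ _ x _ + _ = _
  rw [fderiv_fun_mul (diffAt_coord m) hg]
  simp only [ContinuousLinearMap.add_apply, ContinuousLinearMap.coe_smul', Pi.smul_apply,
    smul_eq_mul, fderiv_coord_single]
  unfold Dop
  by_cases hkm : k = m
  · subst hkm
    rw [flipC_self]
    have hxk : ((x k : ℝ) : ℂ) ≠ 0 := Complex.ofReal_ne_zero.2 (hx k)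
    simp only [eq_self_iff_true, if_true, Complex.ofReal_neg]
    field_simp
    ring
  · rw [flipC_ne (fun h => hkm h.symm : m ≠ k)]
    simp only [if_neg hkm]
    ring

lemma Dop_sq_mul (μ : Fin N → ℝ) (k m : Fin N) (hg : DifferentiableAt ℝ g x)
    (hx : x ∈ Udom N) :
    Dop μ k (fun y => ((y m : ℝ) : ℂ) ^ 2 * g y) x
      = ((x m : ℝ) : ℂ) ^ 2 * Dop μ k g x
        + (if k = m then 2 * ((x k : ℝ) : ℂ) * g x else 0) := by
  have h1 : (fun y => ((y m : ℝ) : ℂ) ^ 2 * g y)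
      = fun y => ((y m : ℝ) : ℂ) * (((y m : ℝ) : ℂ) * g y) := by
    funext y; ring
  rw [h1, Dop_coord_mul μ k m ((diffAt_coord m).fun_mul hg) hx,
    Dop_coord_mul μ k m hg hx]
  by_cases hkm : k = m
  · subst hkm
    rw [flipC_self]
    simp only [Complex.ofReal_neg]
    split_ifs with h
    · ring
    · simp at h
  · simp only [if_neg hkm]
    ring

lemma Dop_sumsq_mul (μ : Fin N → ℝ) (k : Fin N) (hg : DifferentiableAt ℝ g x)
    (hx : x ∈ Udom N) :
    Dop μ k (fun y => (∑ m, ((y m : ℝ) : ℂ) ^ 2) * g y) x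
      = (∑ m, ((x m : ℝ) : ℂ) ^ 2) * Dop μ k g x + 2 * ((x k : ℝ) : ℂ) * g x := by
  have h1 : (fun y => (∑ m, ((y m : ℝ) : ℂ) ^ 2) * g y)
      = fun y => ∑ m, ((y m : ℝ) : ℂ) ^ 2 * g y := by
    funext y; rw [Finset.sum_mul]
  rw [h1, Dop_sum Finset.univ _ μ k
    (fun m _ => ((diffAt_coord m).fun_pow 2).fun_mul hg)]
  have h2 : ∀ m ∈ Finset.univ, Dop μ k (fun y => ((y m : ℝ) : ℂ) ^ 2 * g y) x
      = ((x m : ℝ) : ℂ) ^ 2 * Dop μ k g x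
        + (if k = m then 2 * ((x k : ℝ) : ℂ) * g x else 0) :=
    fun m _ => Dop_sq_mul μ k m hg hx
  rw [Finset.sum_congr rfl h2, Finset.sum_add_distrib, Finset.sum_ite_eq,
    if_pos (Finset.mem_univ k), ← Finset.sum_mul]

lemma Dop_flip_self (μ : Fin N → ℝ) (k : Fin N)
    (hg : DifferentiableAt ℝ g (flipC k x)) (hx : x ∈ Udom N) :
    Dop μ k (Rop k g) x = - Dop μ k g (flipC k x) := by
  have hcomp : Rop k g = g ∘ (flipL k) := rfl
  have hfd : fderiv ℝ (Rop k g) x (Pi.single k 1)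
      = fderiv ℝ g (flipC k x) (flipL k (Pi.single k 1)) := by
    rw [hcomp, fderiv_comp (𝕜 := ℝ) x
      (show DifferentiableAt ℝ g ((flipL k) x) from hg) (flipL k).differentiableAt,
      (flipL k).fderiv]
    rfl
  show fderiv ℝ (Rop k g) x _ + _ = _
  rw [hfd, flipL_single_self, map_neg]
  unfold Dop Rop
  rw [flipC_flipC, flipC_self]
  have hxk : ((x k : ℝ) : ℂ) ≠ 0 := Complex.ofReal_ne_zero.2 (hx k)
  simp only [Complex.ofReal_neg]
  field_simp
  ring


/-! ### Ratio derivative, chain rule for flips, symmetry of second derivative -/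

lemma hasFDerivAt_ratio (c : ℂ) {j : Fin N} (hne : x j ≠ 0) :
    HasFDerivAt (fun y : Fin N → ℝ => c / ((y j : ℝ) : ℂ))
      (c • (Complex.ofRealCLM.comp
        ((-(x j ^ 2)⁻¹) • (ContinuousLinearMap.proj j : (Fin N → ℝ) →L[ℝ] ℝ)))) x := by
  have hproj : HasFDerivAt (fun y : Fin N → ℝ => y j)
      (ContinuousLinearMap.proj j : (Fin N → ℝ) →L[ℝ] ℝ) x :=
    (ContinuousLinearMap.proj j : (Fin N → ℝ) →L[ℝ] ℝ).hasFDerivAt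
  have hq : HasFDerivAt (fun y : Fin N → ℝ => (y j)⁻¹)
      ((-(x j ^ 2)⁻¹) • (ContinuousLinearMap.proj j : (Fin N → ℝ) →L[ℝ] ℝ)) x :=
    (hasDerivAt_inv hne).comp_hasFDerivAt x hproj
  have h2 := (Complex.ofRealCLM.hasFDerivAt.comp x hq).const_mul c
  have heq : (fun y : Fin N → ℝ => c / ((y j : ℝ) : ℂ))
      = fun y : Fin N → ℝ => c * Complex.ofRealCLM ((fun y : Fin N → ℝ => (y j)⁻¹) y) := by
    funext y
    simp [div_eq_mul_inv]
  rw [heq]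
  exact h2

lemma diffAt_ratio (c : ℂ) {j : Fin N} (hne : x j ≠ 0) :
    DifferentiableAt ℝ (fun y : Fin N → ℝ => c / ((y j : ℝ) : ℂ)) x :=
  (hasFDerivAt_ratio c hne).differentiableAt

lemma fderiv_ratio_zero (c : ℂ) {j k : Fin N} (hkj : k ≠ j) (hne : x j ≠ 0) :
    fderiv ℝ (fun y : Fin N → ℝ => c / ((y j : ℝ) : ℂ)) x (Pi.single k 1) = 0 := by
  rw [(hasFDerivAt_ratio c hne).fderiv]
  have h0 : (Pi.single k 1 : Fin N → ℝ) j = 0 := Pi.single_eq_of_ne (Ne.symm hkj) 1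
  simp [ContinuousLinearMap.proj_apply, h0]

lemma fderiv_comp_flip {j : Fin N} (hg : DifferentiableAt ℝ g (flipC j x)) (v : Fin N → ℝ) :
    fderiv ℝ (fun y => g (flipC j y)) x v = fderiv ℝ g (flipC j x) (flipL j v) := by
  have h1 : (fun y => g (flipC j y)) = g ∘ (flipL j) := rfl
  rw [h1, fderiv_comp (𝕜 := ℝ) x
    (show DifferentiableAt ℝ g ((flipL j) x) from hg) (flipL j).differentiableAt,
    (flipL j).fderiv]
  rfl

lemma fderiv_fderiv_symm (hg : SOn g) (hx : x ∈ Udom N) (v w : Fin N → ℝ) :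
    fderiv ℝ (fun y => fderiv ℝ g y v) x w = fderiv ℝ (fun y => fderiv ℝ g y w) x v := by
  have hca : ContDiffAt ℝ 2 g x := (hg.cAt hx).of_le (WithTop.coe_le_coe.2 le_top)
  have hsym := hca.isSymmSndFDerivAt (by simp)
  have hdf : DifferentiableAt ℝ (fderiv ℝ g) x := by
    have hfd1 : ContDiffOn ℝ (⊤ : ℕ∞) (fderiv ℝ g) (Udom N) :=
      hg.fderiv_of_isOpen isOpen_Udom (by simp)
    exact (hfd1.contDiffAt (mem_nhds_Udom hx)).differentiableAt (by simp)
  have h1 : ∀ u : Fin N → ℝ, fderiv ℝ (fun y => fderiv ℝ g y u) x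
      = (ContinuousLinearMap.apply ℝ ℂ u).comp (fderiv ℝ (fderiv ℝ g) x) := by
    intro u
    have h2 : (fun y => fderiv ℝ g y u)
        = (ContinuousLinearMap.apply ℝ ℂ u) ∘ (fderiv ℝ g) := rfl
    rw [h2, fderiv_comp (𝕜 := ℝ) x
      (ContinuousLinearMap.apply ℝ ℂ u).differentiableAt hdf,
      ContinuousLinearMap.fderiv]
  rw [h1 v, h1 w]
  exact hsym.eq w v


/-! ### Commutativity of Dunkl operators -/

lemma Dop_Dop_expand {i j : Fin N} (hg : SOn g) (hij : i ≠ j) (hx : x ∈ Udom N) :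
    Dop μ i (Dop μ j g) x =
      fderiv ℝ (fun y => fderiv ℝ g y (Pi.single j 1)) x (Pi.single i 1)
      + ((μ j : ℝ) : ℂ) / ((x j : ℝ) : ℂ)
          * (fderiv ℝ g x (Pi.single i 1) - fderiv ℝ g (flipC j x) (Pi.single i 1))
      + ((μ i : ℝ) : ℂ) / ((x i : ℝ) : ℂ)
          * (fderiv ℝ g x (Pi.single j 1) - fderiv ℝ g (flipC i x) (Pi.single j 1))
      + ((μ i : ℝ) : ℂ) / ((x i : ℝ) : ℂ) * (((μ j : ℝ) : ℂ) / ((x j : ℝ) : ℂ))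
          * (g x - g (flipC j x) - g (flipC i x) + g (flipC j (flipC i x))) := by
  have hgx := hg.dAt hx
  have hgflipj : DifferentiableAt ℝ (fun y => g (flipC j y)) x := by
    have h1 : (fun y => g (flipC j y)) = g ∘ (flipL j) := rfl
    rw [h1]
    exact (hg.dAt (flipC_mem hx j)).comp x (flipL j).differentiableAt
  have hA : DifferentiableAt ℝ (fun y => fderiv ℝ g y (Pi.single j 1)) x :=
    (hg.fd (Pi.single j 1)).dAt hx
  have hc : DifferentiableAt ℝ (fun y : Fin N → ℝ => ((μ j : ℝ):ℂ) / ((y j : ℝ):ℂ)) x :=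
    diffAt_ratio _ (hx j)
  have hh : DifferentiableAt ℝ (fun y => g y - g (flipC j y)) x := hgx.sub hgflipj
  have hdecomp : Dop μ j g = fun y =>
      (fun y => fderiv ℝ g y (Pi.single j 1)) y
      + (fun y : Fin N → ℝ => ((μ j : ℝ):ℂ) / ((y j : ℝ):ℂ)) y
        * (fun y => g y - g (flipC j y)) y := rfl
  have hsplit : fderiv ℝ (Dop μ j g) x (Pi.single i 1)
      = fderiv ℝ (fun y => fderiv ℝ g y (Pi.single j 1)) x (Pi.single i 1)
        + ((μ j : ℝ):ℂ) / ((x j : ℝ):ℂ)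
          * (fderiv ℝ g x (Pi.single i 1) - fderiv ℝ g (flipC j x) (Pi.single i 1)) := by
    rw [hdecomp, fderiv_fun_add hA (hc.fun_mul hh), fderiv_fun_mul hc hh, fderiv_fun_sub hgx hgflipj]
    simp only [ContinuousLinearMap.add_apply, ContinuousLinearMap.coe_smul', Pi.smul_apply,
      smul_eq_mul, ContinuousLinearMap.coe_sub', Pi.sub_apply]
    rw [fderiv_ratio_zero _ hij (hx j), fderiv_comp_flip (hg.dAt (flipC_mem hx j)) _,
      flipL_single_ne hij]
    ring
  show fderiv ℝ (Dop μ j g) x (Pi.single i 1)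
      + ((μ i : ℝ):ℂ) / ((x i : ℝ):ℂ) * (Dop μ j g x - Dop μ j g (flipC i x)) = _
  rw [hsplit]
  unfold Dop
  rw [flipC_ne (Ne.symm hij) x]
  ring

lemma Dop_comm {i j : Fin N} (hg : SOn g) (hx : x ∈ Udom N) :
    Dop μ i (Dop μ j g) x = Dop μ j (Dop μ i g) x := by
  rcases eq_or_ne i j with rfl | hij
  · rfl
  rw [Dop_Dop_expand hg hij hx, Dop_Dop_expand hg hij.symm hx,
    fderiv_fderiv_symm hg hx, flipC_comm j i x]
  ring

lemma Dop_comm_fun (hg : SOn g) (μ : Fin N → ℝ) (a b : Fin N) :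
    Set.EqOn (Dop μ a (Dop μ b g)) (Dop μ b (Dop μ a g)) (Udom N) :=
  fun _ hy => Dop_comm hg hy


/-! ### Block computations -/

lemma Dop_flip_self' (μ : Fin N → ℝ) (k : Fin N)
    (hg : DifferentiableAt ℝ g (flipC k x)) (hx : x ∈ Udom N) :
    Dop μ k (fun y => g (flipC k y)) x = - Dop μ k g (flipC k x) :=
  Dop_flip_self μ k hg hx

lemma Dop_lin (μ : Fin N → ℝ) (k : Fin N) (a b : ℂ) (h₁ : SOn g₁) (h₂ : SOn g₂) :
    Set.EqOn (Dop μ k (fun y => a * g₁ y + b * g₂ y))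
      (fun y => a * Dop μ k g₁ y + b * Dop μ k g₂ y) (Udom N) := by
  intro y hy
  rw [Dop_add μ k ((h₁.dAt hy).const_mul a) ((h₂.dAt hy).const_mul b),
    Dop_const_mul a μ k (h₁.dAt hy), Dop_const_mul b μ k (h₂.dAt hy)]

lemma Dop_lin' (μ : Fin N → ℝ) (k : Fin N) (a b : ℂ) (h₁ : SOn g₁) (h₂ : SOn g₂)
    (hx : x ∈ Udom N) :
    Dop μ k (fun y => a * g₁ y + b * g₂ y) x = a * Dop μ k g₁ x + b * Dop μ k g₂ x := by
  rw [Dop_add μ k ((h₁.dAt hx).const_mul a) ((h₂.dAt hx).const_mul b),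
    Dop_const_mul a μ k (h₁.dAt hx), Dop_const_mul b μ k (h₂.dAt hx)]

lemma sum_DkDk_swap (hg : SOn g) (μ : Fin N → ℝ) (i j : Fin N) (hx : x ∈ Udom N) :
    ∑ k, Dop μ k (Dop μ k (Dop μ i (Dop μ j g))) x
      = Dop μ i (Dop μ j (fun y => ∑ k, Dop μ k (Dop μ k g) y)) x := by
  have hterm : ∀ k : Fin N, Dop μ k (Dop μ k (Dop μ i (Dop μ j g))) x
      = Dop μ i (Dop μ j (Dop μ k (Dop μ k g))) x := by
    intro k
    have s1 : Dop μ k (Dop μ k (Dop μ i (Dop μ j g))) x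
        = Dop μ k (Dop μ i (Dop μ k (Dop μ j g))) x :=
      Dop_congr (Dop_comm_fun (hg.dop μ j) μ k i) μ k hx
    have s2 : Dop μ k (Dop μ i (Dop μ k (Dop μ j g))) x
        = Dop μ i (Dop μ k (Dop μ k (Dop μ j g))) x :=
      Dop_comm ((hg.dop μ j).dop μ k) hx
    have s3 : Dop μ i (Dop μ k (Dop μ k (Dop μ j g))) x
        = Dop μ i (Dop μ k (Dop μ j (Dop μ k g))) x :=
      Dop_congr (Dop_congr_fun (Dop_comm_fun hg μ k j) μ k) μ i hx
    have s4 : Dop μ i (Dop μ k (Dop μ j (Dop μ k g))) x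
        = Dop μ i (Dop μ j (Dop μ k (Dop μ k g))) x :=
      Dop_congr (Dop_comm_fun (hg.dop μ k) μ k j) μ i hx
    rw [s1, s2, s3, s4]
  rw [Finset.sum_congr rfl (fun k _ => hterm k)]
  have hsum1 : Set.EqOn (Dop μ j (fun y => ∑ k, Dop μ k (Dop μ k g) y))
      (fun y => ∑ k, Dop μ j (Dop μ k (Dop μ k g)) y) (Udom N) := by
    intro y hy
    exact Dop_sum Finset.univ _ μ j (fun m _ => ((hg.dop μ m).dop μ m).dAt hy)
  rw [Dop_congr hsum1 μ i hx,
    Dop_sum Finset.univ _ μ i (fun m _ => (((hg.dop μ m).dop μ m).dop μ j).dAt hx)]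

lemma DkDk_coord2 (hg : SOn g) (μ : Fin N → ℝ) (i j k : Fin N) (hx : x ∈ Udom N) :
    Dop μ k (Dop μ k (fun y => ((y i : ℝ) : ℂ) * (((y j : ℝ) : ℂ) * g y))) x
      = ((x i : ℝ) : ℂ) * ((x j : ℝ) : ℂ) * Dop μ k (Dop μ k g) x
        + (if k = i then 2 * ((x j : ℝ) : ℂ) * Dop μ i g x else 0)
        + (if k = j then 2 * ((x i : ℝ) : ℂ) * Dop μ j g x else 0)
        + (if k = i then
            (if i = j then 2 * g x + 4 * ((μ i : ℝ) : ℂ) * g (flipC i x) else 0) else 0) := by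
  by_cases hki : k = i
  · subst hki
    by_cases hkj : k = j
    · subst hkj
      -- case k = i = j
      have step1 : Set.EqOn
          (Dop μ k (fun y => ((y k : ℝ) : ℂ) * (((y k : ℝ) : ℂ) * g y)))
          (fun y => ((y k : ℝ) : ℂ) * (((y k : ℝ) : ℂ) * Dop μ k g y)
            + 2 * (((y k : ℝ) : ℂ) * g y)) (Udom N) := by
        intro y hy
        rw [Dop_coord_mul μ k k ((hg.coord_mul k).dAt hy) hy,
          Dop_coord_mul μ k k (hg.dAt hy) hy]
        simp only [flipC_self, Complex.ofReal_neg]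
        split_ifs <;> first | ring | simp_all
      rw [Dop_congr step1 μ k hx,
        Dop_add μ k (((hg.dop μ k).coord_mul k |>.coord_mul k).dAt hx)
          (((hg.coord_mul k).const_mul 2).dAt hx),
        Dop_coord_mul μ k k (((hg.dop μ k).coord_mul k).dAt hx) hx,
        Dop_coord_mul μ k k ((hg.dop μ k).dAt hx) hx,
        Dop_const_mul 2 μ k ((hg.coord_mul k).dAt hx),
        Dop_coord_mul μ k k (hg.dAt hx) hx]
      simp only [flipC_self, Complex.ofReal_neg]
      split_ifs <;> first | ring | simp_all
    · -- case k = i ≠ j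
      have step1 : Set.EqOn
          (Dop μ k (fun y => ((y k : ℝ) : ℂ) * (((y j : ℝ) : ℂ) * g y)))
          (fun y => (((y k : ℝ) : ℂ) * (((y j : ℝ) : ℂ) * Dop μ k g y)
            + ((y j : ℝ) : ℂ) * g y)
            + (2 * ((μ k : ℝ) : ℂ)) * (((y j : ℝ) : ℂ) * g (flipC k y))) (Udom N) := by
        intro y hy
        rw [Dop_coord_mul μ k k ((hg.coord_mul j).dAt hy) hy,
          Dop_coord_mul μ k j (hg.dAt hy) hy]
        simp only [flipC_ne (Ne.symm hkj)]
        split_ifs <;> first | ring | simp_all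
      have hC2 : DifferentiableAt ℝ (fun y => (((y j : ℝ) : ℂ) * g (flipC k y))) x :=
        ((hg.rop k).coord_mul j).dAt hx
      have hRd : DifferentiableAt ℝ (fun y => g (flipC k y)) x := (hg.rop k).dAt hx
      rw [Dop_congr step1 μ k hx,
        Dop_add μ k
          ((((hg.dop μ k).coord_mul j |>.coord_mul k).dAt hx).fun_add
            ((hg.coord_mul j).dAt hx))
          (hC2.const_mul _),
        Dop_add μ k (((hg.dop μ k).coord_mul j |>.coord_mul k).dAt hx)
          ((hg.coord_mul j).dAt hx),
        Dop_coord_mul μ k k (((hg.dop μ k).coord_mul j).dAt hx) hx,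
        Dop_coord_mul μ k j ((hg.dop μ k).dAt hx) hx,
        Dop_coord_mul μ k j (hg.dAt hx) hx,
        Dop_const_mul (2 * ((μ k : ℝ) : ℂ)) μ k hC2,
        Dop_coord_mul μ k j hRd hx,
        Dop_flip_self' μ k (hg.dAt (flipC_mem hx k)) hx]
      simp only [flipC_ne (Ne.symm hkj)]
      split_ifs <;> first | ring | simp_all
  · by_cases hkj : k = j
    · subst hkj
      -- case k = j ≠ i
      have step1 : Set.EqOn
          (Dop μ k (fun y => ((y i : ℝ) : ℂ) * (((y k : ℝ) : ℂ) * g y)))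
          (fun y => (((y i : ℝ) : ℂ) * (((y k : ℝ) : ℂ) * Dop μ k g y)
            + ((y i : ℝ) : ℂ) * g y)
            + (2 * ((μ k : ℝ) : ℂ)) * (((y i : ℝ) : ℂ) * g (flipC k y))) (Udom N) := by
        intro y hy
        rw [Dop_coord_mul μ k i ((hg.coord_mul k).dAt hy) hy,
          Dop_coord_mul μ k k (hg.dAt hy) hy]
        simp only [flipC_ne (Ne.symm hki)]
        split_ifs <;> first | ring | simp_all
      have hC2 : DifferentiableAt ℝ (fun y => (((y i : ℝ) : ℂ) * g (flipC k y))) x :=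
        ((hg.rop k).coord_mul i).dAt hx
      have hRd : DifferentiableAt ℝ (fun y => g (flipC k y)) x := (hg.rop k).dAt hx
      rw [Dop_congr step1 μ k hx,
        Dop_add μ k
          ((((hg.dop μ k).coord_mul k |>.coord_mul i).dAt hx).fun_add
            ((hg.coord_mul i).dAt hx))
          (hC2.const_mul _),
        Dop_add μ k (((hg.dop μ k).coord_mul k |>.coord_mul i).dAt hx)
          ((hg.coord_mul i).dAt hx),
        Dop_coord_mul μ k i (((hg.dop μ k).coord_mul k).dAt hx) hx,
        Dop_coord_mul μ k k ((hg.dop μ k).dAt hx) hx,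
        Dop_coord_mul μ k i (hg.dAt hx) hx,
        Dop_const_mul (2 * ((μ k : ℝ) : ℂ)) μ k hC2,
        Dop_coord_mul μ k i hRd hx,
        Dop_flip_self' μ k (hg.dAt (flipC_mem hx k)) hx]
      simp only [flipC_ne (Ne.symm hki), flipC_self, Complex.ofReal_neg]
      split_ifs <;> first | ring | simp_all
    · -- case k ∉ {i, j}
      have step1 : Set.EqOn
          (Dop μ k (fun y => ((y i : ℝ) : ℂ) * (((y j : ℝ) : ℂ) * g y)))
          (fun y => ((y i : ℝ) : ℂ) * (((y j : ℝ) : ℂ) * Dop μ k g y)) (Udom N) := by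
        intro y hy
        rw [Dop_coord_mul μ k i ((hg.coord_mul j).dAt hy) hy,
          Dop_coord_mul μ k j (hg.dAt hy) hy]
        split_ifs <;> first | ring | simp_all
      rw [Dop_congr step1 μ k hx,
        Dop_coord_mul μ k i (((hg.dop μ k).coord_mul j).dAt hx) hx,
        Dop_coord_mul μ k j ((hg.dop μ k).dAt hx) hx]
      split_ifs <;> first | ring | simp_all


lemma sum_DkDk_coord2 (hg : SOn g) (μ : Fin N → ℝ) (i j : Fin N) (hx : x ∈ Udom N) :
    ∑ k, Dop μ k (Dop μ k (fun y => ((y i : ℝ) : ℂ) * (((y j : ℝ) : ℂ) * g y))) x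
      = ((x i : ℝ) : ℂ) * ((x j : ℝ) : ℂ) * (∑ k, Dop μ k (Dop μ k g) x)
        + 2 * ((x j : ℝ) : ℂ) * Dop μ i g x + 2 * ((x i : ℝ) : ℂ) * Dop μ j g x
        + (if i = j then 2 * g x + 4 * ((μ i : ℝ) : ℂ) * g (flipC i x) else 0) := by
  rw [Finset.sum_congr rfl (fun k _ => DkDk_coord2 hg μ i j k hx),
    Finset.sum_add_distrib, Finset.sum_add_distrib, Finset.sum_add_distrib,
    Finset.sum_ite_eq', Finset.sum_ite_eq', Finset.sum_ite_eq', ← Finset.mul_sum]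
  simp only [Finset.mem_univ, if_true]

lemma DiDjX (hg : SOn g) (μ : Fin N → ℝ) (i j : Fin N) (hx : x ∈ Udom N) :
    Dop μ i (Dop μ j (fun y => (∑ m, ((y m : ℝ) : ℂ) ^ 2) * g y)) x
      = (∑ m, ((x m : ℝ) : ℂ) ^ 2) * Dop μ i (Dop μ j g) x
        + 2 * ((x j : ℝ) : ℂ) * Dop μ i g x + 2 * ((x i : ℝ) : ℂ) * Dop μ j g x
        + (if i = j then 2 * g x + 4 * ((μ i : ℝ) : ℂ) * g (flipC i x) else 0) := by
  have step1 : Set.EqOn (Dop μ j (fun y => (∑ m, ((y m : ℝ) : ℂ) ^ 2) * g y))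
      (fun y => (∑ m, ((y m : ℝ) : ℂ) ^ 2) * Dop μ j g y
        + 2 * (((y j : ℝ) : ℂ) * g y)) (Udom N) := by
    intro y hy
    rw [Dop_sumsq_mul μ j (hg.dAt hy) hy]
    ring
  have hA : DifferentiableAt ℝ (fun y => (∑ m, ((y m : ℝ) : ℂ) ^ 2) * Dop μ j g y) x :=
    ((hg.dop μ j).sumsq_mul).dAt hx
  have hB : DifferentiableAt ℝ (fun y => (((y j : ℝ) : ℂ) * g y)) x :=
    (hg.coord_mul j).dAt hx
  rw [Dop_congr step1 μ i hx,
    Dop_add μ i hA (hB.const_mul 2),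
    Dop_sumsq_mul μ i ((hg.dop μ j).dAt hx) hx,
    Dop_const_mul 2 μ i hB,
    Dop_coord_mul μ i j (hg.dAt hx) hx]
  split_ifs <;> first | ring | simp_all

end DunklAux

open DunklAux

/-- Each component of the Dunkl Demkov–Fradkin tensor commutes with the Dunkl oscillator. -/
theorem dunkl_demkov_fradkin_conserved (N : ℕ) (hN : 1 ≤ N) (μ : Fin N → ℝ)
    (hb ω : ℝ) (hbpos : hb > 0)
    (f : (Fin N → ℝ) → ℂ) (hf : ContDiffOn ℝ (⊤ : ℕ∞) f (Udom N)) :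
    ∀ i j : Fin N, ∀ x ∈ Udom N,
      Hosc μ hb ω (DF μ hb ω i j f) x = DF μ hb ω i j (Hosc μ hb ω f) x := by
  intro i j x hx
  set c : ℂ := -(Complex.I * (hb : ℂ)) with hc
  have hfS : SOn f := hf
  -- basic smoothness facts
  have hf2S : SOn (Dop μ i (Dop μ j f)) := (hfS.dop μ j).dop μ i
  have hPfS : SOn (fun y => ((y i : ℝ) : ℂ) * (((y j : ℝ) : ℂ) * f y)) :=
    (hfS.coord_mul j).coord_mul i
  have hSfS : SOn (fun y => ∑ k, Dop μ k (Dop μ k f) y) := hfS.sumD μ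
  have hXfS : SOn (fun y => (∑ m, ((y m : ℝ) : ℂ) ^ 2) * f y) := hfS.sumsq_mul
  -- reduction of Pop ∘ Pop to Dop ∘ Dop on U
  have hPP : ∀ (a b : Fin N) (g : (Fin N → ℝ) → ℂ), SOn g → ∀ {y : Fin N → ℝ},
      y ∈ Udom N →
      Pop μ hb a (Pop μ hb b g) y = (c * c) * Dop μ a (Dop μ b g) y := by
    intro a b g hg y hy
    show c * Dop μ a (Pop μ hb b g) y = _
    have h1 : Pop μ hb b g = fun z => c * Dop μ b g z := rfl
    rw [h1, Dop_const_mul c μ a ((hg.dop μ b).dAt hy)]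
    ring
  -- rewriting DF f and Hosc f on U
  have hDF : Set.EqOn (DF μ hb ω i j f)
      (fun y => (c * c) * Dop μ i (Dop μ j f) y
        + (ω : ℂ) ^ 2 * (((y i : ℝ) : ℂ) * (((y j : ℝ) : ℂ) * f y))) (Udom N) := by
    intro y hy
    show Pop μ hb i (Pop μ hb j f) y + (ω : ℂ) ^ 2 * (y i : ℂ) * (y j : ℂ) * f y = _
    rw [hPP i j f hfS hy]
    ring
  have hHf : Set.EqOn (Hosc μ hb ω f)
      (fun y => ((c * c) / 2) * (∑ k, Dop μ k (Dop μ k f) y)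
        + ((ω : ℂ) ^ 2 / 2) * ((∑ m, ((y m : ℝ) : ℂ) ^ 2) * f y)) (Udom N) := by
    intro y hy
    show (1 / 2 : ℂ) * ∑ k, Pop μ hb k (Pop μ hb k f) y
        + (ω : ℂ) ^ 2 / 2 * (∑ m, ((y m : ℝ) : ℂ) ^ 2) * f y = _
    rw [Finset.sum_congr rfl (fun k _ => hPP k k f hfS hy), ← Finset.mul_sum]
    ring
  have hSDF : SOn (DF μ hb ω i j f) :=
    (((hf2S.const_mul (c * c))).add (hPfS.const_mul ((ω : ℂ) ^ 2))).congr
      (fun y hy => hDF hy)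
  have hSH : SOn (Hosc μ hb ω f) :=
    (((hSfS.const_mul ((c * c) / 2))).add (hXfS.const_mul ((ω : ℂ) ^ 2 / 2))).congr
      (fun y hy => hHf hy)
  -- LHS per-k reduction
  have hDkDkDF : ∀ k : Fin N, Pop μ hb k (Pop μ hb k (DF μ hb ω i j f)) x
      = (c * c) * ((c * c) * Dop μ k (Dop μ k (Dop μ i (Dop μ j f))) x
          + (ω : ℂ) ^ 2
            * Dop μ k (Dop μ k (fun y => ((y i : ℝ) : ℂ) * (((y j : ℝ) : ℂ) * f y))) x) := by
    intro k
    rw [hPP k k _ hSDF hx,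
      Dop_congr (Dop_congr_fun hDF μ k) μ k hx,
      Dop_congr (Dop_lin μ k (c * c) ((ω : ℂ) ^ 2) hf2S hPfS) μ k hx,
      Dop_lin' μ k (c * c) ((ω : ℂ) ^ 2) (hf2S.dop μ k) (hPfS.dop μ k) hx]
  -- RHS reduction
  have hDiDjH : Pop μ hb i (Pop μ hb j (Hosc μ hb ω f)) x
      = (c * c) * (((c * c) / 2)
            * Dop μ i (Dop μ j (fun y => ∑ k, Dop μ k (Dop μ k f) y)) x
          + ((ω : ℂ) ^ 2 / 2)
            * Dop μ i (Dop μ j (fun y => (∑ m, ((y m : ℝ) : ℂ) ^ 2) * f y)) x) := by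
    rw [hPP i j _ hSH hx,
      Dop_congr (Dop_congr_fun hHf μ j) μ i hx,
      Dop_congr (Dop_lin μ j ((c * c) / 2) ((ω : ℂ) ^ 2 / 2) hSfS hXfS) μ i hx,
      Dop_lin' μ i ((c * c) / 2) ((ω : ℂ) ^ 2 / 2) (hSfS.dop μ j) (hXfS.dop μ j) hx]
  -- assemble
  show (1 / 2 : ℂ) * ∑ k, Pop μ hb k (Pop μ hb k (DF μ hb ω i j f)) x
      + (ω : ℂ) ^ 2 / 2 * (∑ m, ((x m : ℝ) : ℂ) ^ 2) * DF μ hb ω i j f x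
      = Pop μ hb i (Pop μ hb j (Hosc μ hb ω f)) x
        + (ω : ℂ) ^ 2 * ((x i : ℝ) : ℂ) * ((x j : ℝ) : ℂ) * Hosc μ hb ω f x
  rw [Finset.sum_congr rfl (fun k _ => hDkDkDF k)]
  have hexp : ∀ k : Fin N,
      (c * c) * ((c * c) * Dop μ k (Dop μ k (Dop μ i (Dop μ j f))) x
          + (ω : ℂ) ^ 2
            * Dop μ k (Dop μ k (fun y => ((y i : ℝ) : ℂ) * (((y j : ℝ) : ℂ) * f y))) x)
      = (c * c * (c * c)) * Dop μ k (Dop μ k (Dop μ i (Dop μ j f))) x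
        + (c * c * (ω : ℂ) ^ 2)
          * Dop μ k (Dop μ k (fun y => ((y i : ℝ) : ℂ) * (((y j : ℝ) : ℂ) * f y))) x :=
    fun k => by ring
  rw [Finset.sum_congr rfl (fun k _ => hexp k), Finset.sum_add_distrib,
    ← Finset.mul_sum, ← Finset.mul_sum,
    sum_DkDk_swap hfS μ i j hx, sum_DkDk_coord2 hfS μ i j hx,
    hDiDjH, DiDjX hfS μ i j hx, hDF hx, hHf hx]
  simp only []
  ring

end
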